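/- For all integers n ≥ 1, sqrt((n + 1/2)/(2π)) ≤ Ω_{n-1}/Ω_n ≤ sqrt((n + π/2 - 1)/(2π)), where Ω_n = π^(n/2)/Γ(n/2 + 1), and the constants 1/2 and π/2 - 1 are best possible. -/

import Mathlib

open Real

noncomputable def unitBallVolume (n : ℕ) : ℝ := π ^ ((n : ℝ) / 2) / Real.Gamma ((n : ℝ) / 2 + 1)

open Filter Topology

/-!
With `r k = Ω_k / Ω_{k+1}`, the recursion `Ω_{k+2} = 2π/(k+2) · Ω_k` gives
`r k · r (k+1) = (k+2)/(2π)`, and log-convexity of `Γ` makes `r` increasing, so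
`(k+1)/(2π) ≤ r k ^ 2 ≤ (k+2)/(2π)` for `k ≥ 1`, whence `r k ^ 2 / (k + c) → 1/(2π)` for all `c`.
Since `r (k+2) = r k · (k+3)/(k+2)`, the quotient `r k ^ 2 / (k + c)` is monotone along steps of
two: decreasing for `c = 3/2`, increasing for `c = π/2` once `k ≥ 2`. Comparing with the limit
gives both bounds. The upper constant is attained at `n = 1`; for the lower one, multiplying the
bounds at `k` and `k+1` and using the product formula forces `(2A - 1) k` to stay bounded.
-/

theorem Real.Gamma_add_half_sq_le {x : ℝ} (hx : 0 < x) :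
    Gamma (x + 1 / 2) ^ 2 ≤ Gamma x * Gamma (x + 1) := by
  have h := Gamma_mul_add_mul_le_rpow_Gamma_mul_rpow_Gamma hx (by linarith : 0 < x + 1)
    one_half_pos one_half_pos (add_halves 1)
  rw [show 1 / 2 * x + 1 / 2 * (x + 1) = x + 1 / 2 by ring,
    ← mul_rpow (Gamma_pos_of_pos hx).le (Gamma_pos_of_pos (by linarith)).le,
    ← sqrt_eq_rpow] at h
  exact (le_sqrt (Gamma_pos_of_pos (by linarith)).le (by positivity)).mp h

theorem le_of_tendsto_of_add_two_le {α : Type*} [TopologicalSpace α] [Preorder α]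
    [OrderClosedTopology α] {u : ℕ → α} {a : α} {k₀ k : ℕ}
    (hu : Tendsto u atTop (𝓝 a)) (hstep : ∀ k ≥ k₀, u (k + 2) ≤ u k)
    (hk : k₀ ≤ k) : a ≤ u k := by
  have hanti : Antitone fun j ↦ u (k + 2 * j) :=
    antitone_nat_of_succ_le fun j ↦ by
      rw [mul_add, mul_one, ← add_assoc]; exact hstep _ (by omega)
  have hseq : Tendsto (fun j ↦ k + 2 * j) atTop atTop :=
    tendsto_atTop_mono (fun j ↦ show j ≤ k + 2 * j by omega) tendsto_id
  simpa using hanti.le_of_tendsto (hu.comp hseq) 0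

theorem ge_of_tendsto_of_le_add_two {α : Type*} [TopologicalSpace α] [Preorder α]
    [OrderClosedTopology α] {u : ℕ → α} {a : α} {k₀ k : ℕ}
    (hu : Tendsto u atTop (𝓝 a)) (hstep : ∀ k ≥ k₀, u k ≤ u (k + 2))
    (hk : k₀ ≤ k) : u k ≤ a :=
  le_of_tendsto_of_add_two_le (α := αᵒᵈ) hu hstep hk

theorem unitBallVolume_pos (n : ℕ) : 0 < unitBallVolume n :=
  div_pos (rpow_pos_of_pos pi_pos _) (Gamma_pos_of_pos (by positivity))

theorem unitBallVolume_zero : unitBallVolume 0 = 1 := by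
  simp [unitBallVolume]

theorem unitBallVolume_one : unitBallVolume 1 = 2 := by
  rw [unitBallVolume, Nat.cast_one, Gamma_add_one one_half_pos.ne', Gamma_one_half_eq,
    ← sqrt_eq_rpow]
  field_simp [(sqrt_pos.mpr pi_pos).ne']

theorem unitBallVolume_add_two (n : ℕ) :
    unitBallVolume (n + 2) = 2 * π / (n + 2) * unitBallVolume n := by
  have hcast : ((n + 2 : ℕ) : ℝ) / 2 = n / 2 + 1 := by push_cast; ring
  rw [unitBallVolume, unitBallVolume, hcast, rpow_add_one pi_pos.ne',
    Gamma_add_one (by positivity)]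
  have := (Gamma_pos_of_pos (by positivity : (0 : ℝ) < n / 2 + 1)).ne'
  field_simp

theorem unitBallVolume_mul_le_sq (n : ℕ) :
    unitBallVolume n * unitBallVolume (n + 2) ≤ unitBallVolume (n + 1) ^ 2 := by
  set x : ℝ := n / 2 + 1
  have hx : 0 < x := by positivity
  have h1 : ((n + 1 : ℕ) : ℝ) / 2 + 1 = x + 1 / 2 := by push_cast; ring
  have h2 : ((n + 2 : ℕ) : ℝ) / 2 + 1 = x + 1 := by push_cast; ring
  have hpow : π ^ ((n : ℝ) / 2) * π ^ (((n + 2 : ℕ) : ℝ) / 2) =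
      (π ^ (((n + 1 : ℕ) : ℝ) / 2)) ^ 2 := by
    rw [← rpow_natCast, ← rpow_mul pi_pos.le, ← rpow_add pi_pos]
    push_cast; ring_nf
  simp only [unitBallVolume, h1, h2, div_pow, div_mul_div_comm, hpow]
  exact div_le_div_of_nonneg_left (by positivity) (by positivity) (Gamma_add_half_sq_le hx)

noncomputable def unitBallVolumeRatio (k : ℕ) : ℝ := unitBallVolume k / unitBallVolume (k + 1)

theorem unitBallVolumeRatio_pos (k : ℕ) : 0 < unitBallVolumeRatio k :=
  div_pos (unitBallVolume_pos _) (unitBallVolume_pos _)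

theorem unitBallVolumeRatio_zero : unitBallVolumeRatio 0 = 1 / 2 := by
  rw [unitBallVolumeRatio, unitBallVolume_zero, zero_add, unitBallVolume_one]

theorem unitBallVolumeRatio_mul_succ (k : ℕ) :
    unitBallVolumeRatio k * unitBallVolumeRatio (k + 1) = (k + 2) / (2 * π) := by
  have := unitBallVolume_pos k
  have := unitBallVolume_pos (k + 1)
  rw [unitBallVolumeRatio, unitBallVolumeRatio, unitBallVolume_add_two]
  field_simp

theorem unitBallVolumeRatio_one : unitBallVolumeRatio 1 = 2 / π := by
  have h := unitBallVolumeRatio_mul_succ 0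
  rw [unitBallVolumeRatio_zero, zero_add, Nat.cast_zero, zero_add] at h
  field_simp at h ⊢
  linarith

theorem unitBallVolumeRatio_add_two (k : ℕ) :
    unitBallVolumeRatio (k + 2) = unitBallVolumeRatio k * ((k + 3) / (k + 2)) := by
  have := unitBallVolume_pos (k + 1)
  rw [unitBallVolumeRatio, unitBallVolumeRatio, unitBallVolume_add_two,
    show k + 2 + 1 = k + 1 + 2 by ring, unitBallVolume_add_two]
  field_simp
  push_cast
  ring

theorem unitBallVolumeRatio_le_succ (k : ℕ) :
    unitBallVolumeRatio k ≤ unitBallVolumeRatio (k + 1) := by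
  rw [unitBallVolumeRatio, unitBallVolumeRatio,
    div_le_div_iff₀ (unitBallVolume_pos _) (unitBallVolume_pos _), ← sq]
  exact unitBallVolume_mul_le_sq k

theorem tendsto_unitBallVolumeRatio_sq_div (c : ℝ) :
    Tendsto (fun k : ℕ ↦ unitBallVolumeRatio k ^ 2 / (k + c)) atTop (𝓝 (1 / (2 * π))) := by
  rw [← tendsto_add_atTop_iff_nat 1]
  have hlim (a : ℝ) : Tendsto (fun k : ℕ ↦ (k + a) / (2 * π) / ((k + 1 : ℕ) + c)) atTop
      (𝓝 (1 / (2 * π))) := by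
    refine (tendsto_add_mul_div_add_mul_atTop_nhds a (2 * π * (1 + c)) 1
      (by positivity : 2 * π ≠ 0)).congr fun k ↦ ?_
    rw [div_div]
    push_cast
    ring_nf
  have hpos : ∀ᶠ k : ℕ in atTop, 0 < ((k + 1 : ℕ) : ℝ) + c :=
    (tendsto_atTop_add_const_right _ c (tendsto_natCast_atTop_atTop.comp
      (tendsto_add_atTop_nat 1))).eventually_gt_atTop 0
  refine tendsto_of_tendsto_of_tendsto_of_le_of_le' (hlim 2) (hlim 3) ?_ ?_ <;>
    filter_upwards [hpos] with k hk <;> gcongr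
  · calc (k + 2) / (2 * π) = unitBallVolumeRatio k * unitBallVolumeRatio (k + 1) := by
          rw [unitBallVolumeRatio_mul_succ]
      _ ≤ unitBallVolumeRatio (k + 1) ^ 2 := by
          rw [sq]; gcongr; exacts [(unitBallVolumeRatio_pos _).le, unitBallVolumeRatio_le_succ k]
  · calc unitBallVolumeRatio (k + 1) ^ 2
        ≤ unitBallVolumeRatio (k + 1) * unitBallVolumeRatio (k + 1 + 1) := by
          rw [sq]; gcongr; exacts [(unitBallVolumeRatio_pos _).le, unitBallVolumeRatio_le_succ _]
      _ = (k + 3) / (2 * π) := by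
          rw [unitBallVolumeRatio_mul_succ]; push_cast; ring

theorem unitBallVolumeRatio_sq_div_add_two (c : ℝ) (k : ℕ) :
    unitBallVolumeRatio (k + 2) ^ 2 / ((k + 2 : ℕ) + c) =
      unitBallVolumeRatio k ^ 2 * ((k + 3) ^ 2 / ((k + 2) ^ 2 * (k + 2 + c))) := by
  rw [unitBallVolumeRatio_add_two, mul_pow, div_pow, mul_div_assoc, div_div]
  push_cast
  ring_nf

theorem unitBallVolumeRatio_sq_div_add_two_le {c : ℝ} {k : ℕ} (hc : 0 < k + c)
    (h : (2 * c - 3) * k + 5 * c ≤ 8) :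
    unitBallVolumeRatio (k + 2) ^ 2 / ((k + 2 : ℕ) + c) ≤
      unitBallVolumeRatio k ^ 2 / (k + c) := by
  rw [unitBallVolumeRatio_sq_div_add_two, div_eq_mul_one_div _ (_ + c)]
  refine mul_le_mul_of_nonneg_left ?_ (sq_nonneg _)
  have : 0 < (k : ℝ) + 2 + c := by linarith
  rw [div_le_div_iff₀ (by positivity) hc, one_mul]
  linear_combination h

theorem unitBallVolumeRatio_sq_div_le_add_two {c : ℝ} {k : ℕ} (hc : 0 < k + c)
    (h : 8 ≤ (2 * c - 3) * k + 5 * c) :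
    unitBallVolumeRatio k ^ 2 / (k + c) ≤
      unitBallVolumeRatio (k + 2) ^ 2 / ((k + 2 : ℕ) + c) := by
  rw [unitBallVolumeRatio_sq_div_add_two, div_eq_mul_one_div _ (_ + c)]
  refine mul_le_mul_of_nonneg_left ?_ (sq_nonneg _)
  have : 0 < (k : ℝ) + 2 + c := by linarith
  rw [div_le_div_iff₀ hc (by positivity), one_mul]
  linear_combination h

theorem sqrt_le_unitBallVolumeRatio (k : ℕ) :
    √((k + 3 / 2) / (2 * π)) ≤ unitBallVolumeRatio k := by
  have h := le_of_tendsto_of_add_two_le (tendsto_unitBallVolumeRatio_sq_div (3 / 2))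
    (fun k _ ↦ unitBallVolumeRatio_sq_div_add_two_le (by positivity) (by norm_num)) k.zero_le
  rw [div_le_div_iff₀ (by positivity) (by positivity), one_mul] at h
  rw [sqrt_le_left (unitBallVolumeRatio_pos k).le, div_le_iff₀ (by positivity)]
  exact h

theorem unitBallVolumeRatio_le_sqrt (k : ℕ) :
    unitBallVolumeRatio k ≤ √((k + π / 2) / (2 * π)) := by
  refine le_sqrt_of_sq_le ?_
  have := pi_gt_d2
  -- the monotonicity along steps of two starts at `k = 2`; `k = 0` is the equality case
  match k with
  | 0 =>
    rw [unitBallVolumeRatio_zero]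
    field_simp
    norm_num
  | 1 =>
    rw [unitBallVolumeRatio_one, div_pow, div_le_div_iff₀ (by positivity) (by positivity)]
    push_cast
    nlinarith
  | k + 2 =>
    have h := ge_of_tendsto_of_le_add_two (k₀ := 2) (tendsto_unitBallVolumeRatio_sq_div (π / 2))
      (fun j hj ↦ unitBallVolumeRatio_sq_div_le_add_two (by positivity) (by
        have : (2 : ℝ) ≤ j := by exact_mod_cast hj
        nlinarith)) (Nat.le_add_left 2 k)
    rw [div_le_div_iff₀ (by positivity) (by positivity), one_mul] at h
    rwa [le_div_iff₀ (by positivity)]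

theorem le_one_half_of_forall_sqrt_le_unitBallVolumeRatio {A : ℝ}
    (hA : ∀ k : ℕ, √((k + 1 + A) / (2 * π)) ≤ unitBallVolumeRatio k) : A ≤ 1 / 2 := by
  by_contra! hA'
  have hsq (k : ℕ) : (k + 1 + A) / (2 * π) ≤ unitBallVolumeRatio k ^ 2 :=
    (sqrt_le_left (unitBallVolumeRatio_pos k).le).mp (hA k)
  have key (k : ℕ) : (k + 1 + A) * (k + 2 + A) ≤ (k + 2) ^ 2 := by
    have h := mul_le_mul (hsq k) (hsq (k + 1)) (by positivity) (sq_nonneg _)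
    rw [← mul_pow, unitBallVolumeRatio_mul_succ, div_mul_div_comm, div_pow, ← sq,
      div_le_div_iff_of_pos_right (by positivity)] at h
    push_cast at h
    linarith
  obtain ⟨k, hk⟩ := exists_nat_gt (2 / (2 * A - 1))
  rw [div_lt_iff₀ (by linarith)] at hk
  nlinarith [key k]

theorem alzer_ball_ratio :
    (∀ n : ℕ, 1 ≤ n →
      Real.sqrt (((n : ℝ) + 1 / 2) / (2 * π)) ≤ unitBallVolume (n - 1) / unitBallVolume n ∧
      unitBallVolume (n - 1) / unitBallVolume n ≤ Real.sqrt (((n : ℝ) + (π / 2 - 1)) / (2 * π))) ∧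
    (∀ A : ℝ, (∀ n : ℕ, 1 ≤ n →
        Real.sqrt (((n : ℝ) + A) / (2 * π)) ≤ unitBallVolume (n - 1) / unitBallVolume n) →
      A ≤ 1 / 2) ∧
    (∀ B : ℝ, (∀ n : ℕ, 1 ≤ n →
        unitBallVolume (n - 1) / unitBallVolume n ≤ Real.sqrt (((n : ℝ) + B) / (2 * π))) →
      π / 2 - 1 ≤ B) := by
  have hratio (k : ℕ) : unitBallVolume (k + 1 - 1) / unitBallVolume (k + 1) =
      unitBallVolumeRatio k := rfl
  refine ⟨fun n hn ↦ ?_, fun A hA ↦ ?_, fun B hB ↦ ?_⟩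
  · obtain ⟨k, rfl⟩ : ∃ k, n = k + 1 := ⟨n - 1, by omega⟩
    rw [hratio]
    push_cast
    constructor
    · convert sqrt_le_unitBallVolumeRatio k using 3; ring
    · convert unitBallVolumeRatio_le_sqrt k using 3; ring
  · refine le_one_half_of_forall_sqrt_le_unitBallVolumeRatio fun k ↦ ?_
    have h := hA (k + 1) (by omega)
    rw [hratio] at h
    push_cast at h
    exact h
  · have h := hB 1 le_rfl
    rw [hratio 0, unitBallVolumeRatio_zero, Nat.cast_one, le_sqrt' one_half_pos,
      le_div_iff₀ (by positivity)] at h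
    linarith
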